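/- arXiv:0807.5074 — 3 statements merged into one kernel-verified Lean document; each statement's English description precedes it below -/
import Mathlib

section
/- The function ρ(x) = 1/(π(1-x²)√(1-2x²)) for |x| < 1/√2 (and 0 otherwise) is a probability density function, i.e., ∫_{-1/√2}^{1/√2} ρ(x) dx = 1. -/
/-!
The function `x ↦ arcsin (x / √(1 - x²)) / π` is an antiderivative of the density on
`(-1/√2, 1/√2)`, and it extends continuously to the closed interval, where
`x / √(1 - x²) = ±1` at the endpoints, so it rises from `-1/2` to `1/2`. Since the density is
nonnegative it is integrable on the open interval, and the fundamental theorem of calculus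
gives total mass `1`.
-/

open MeasureTheory Real Set

theorem hasDerivAt_div_sqrt_one_sub_sq {x : ℝ} (hx : x ^ 2 < 1) :
    HasDerivAt (fun y => y / √(1 - y ^ 2)) (((1 - x ^ 2) * √(1 - x ^ 2))⁻¹) x := by
  have hpos : 0 < 1 - x ^ 2 := by linarith
  have hs : 0 < √(1 - x ^ 2) := sqrt_pos.mpr hpos
  have hinner : HasDerivAt (fun y : ℝ => 1 - y ^ 2) (-(2 * x)) x := by
    simpa using ((hasDerivAt_pow 2 x).const_sub 1)
  refine ((hasDerivAt_id x).div (hinner.sqrt hpos.ne') hs.ne').congr_deriv ?_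
  have hsq := sq_sqrt hpos.le
  simp only [id]
  field_simp
  linear_combination (-x ^ 2) * hsq

theorem one_sub_sq_div_sqrt_one_sub_sq {x : ℝ} (hx : x ^ 2 < 1) :
    1 - (x / √(1 - x ^ 2)) ^ 2 = (1 - 2 * x ^ 2) / (1 - x ^ 2) := by
  have hpos : 0 < 1 - x ^ 2 := by linarith
  rw [div_pow, sq_sqrt hpos.le]
  field_simp
  ring

theorem hasDerivAt_arcsin_div_sqrt_one_sub_sq {x : ℝ} (hx : 2 * x ^ 2 < 1) :
    HasDerivAt (fun y => arcsin (y / √(1 - y ^ 2)))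
      (((1 - x ^ 2) * √(1 - 2 * x ^ 2))⁻¹) x := by
  have hx1 : x ^ 2 < 1 := by nlinarith
  have hpos : 0 < 1 - x ^ 2 := by linarith
  have hpos2 : 0 < 1 - 2 * x ^ 2 := by linarith
  have hne : 1 - (x / √(1 - x ^ 2)) ^ 2 ≠ 0 := by
    rw [one_sub_sq_div_sqrt_one_sub_sq hx1]; positivity
  have hne_neg_one : x / √(1 - x ^ 2) ≠ -1 := fun h => hne (by rw [h]; norm_num)
  have hne_one : x / √(1 - x ^ 2) ≠ 1 := fun h => hne (by rw [h]; norm_num)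
  refine ((hasDerivAt_arcsin hne_neg_one hne_one).comp x (hasDerivAt_div_sqrt_one_sub_sq hx1)).congr_deriv ?_
  rw [one_sub_sq_div_sqrt_one_sub_sq hx1, sqrt_div' _ hpos.le]
  have hs : √(1 - x ^ 2) ≠ 0 := (sqrt_pos.mpr hpos).ne'
  have hs2 : √(1 - 2 * x ^ 2) ≠ 0 := (sqrt_pos.mpr hpos2).ne'
  field_simp

theorem continuousOn_arcsin_div_sqrt_one_sub_sq :
    ContinuousOn (fun y => arcsin (y / √(1 - y ^ 2))) (Ioo (-1) 1) := by
  refine continuous_arcsin.comp_continuousOn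
    (continuousOn_id.div (by fun_prop) fun x hx => (sqrt_pos.mpr ?_).ne')
  nlinarith [hx.1, hx.2]

theorem one_div_sqrt_two_div_sqrt_one_sub_sq : (1 / √2) / √(1 - (1 / √2) ^ 2) = 1 := by
  have h : 1 - (1 / √2) ^ 2 = 2⁻¹ := by
    rw [div_pow, sq_sqrt zero_le_two]; norm_num
  rw [h, sqrt_inv, one_div, div_self (inv_ne_zero (sqrt_pos.mpr zero_lt_two).ne')]

theorem integral_Ioo_eq_sub_of_hasDerivAt_of_nonneg {f f' : ℝ → ℝ} {a b : ℝ} (hab : a ≤ b)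
    (hcont : ContinuousOn f (Icc a b)) (hderiv : ∀ x ∈ Ioo a b, HasDerivAt f (f' x) x)
    (hpos : ∀ x ∈ Ioo a b, 0 ≤ f' x) : ∫ x in Ioo a b, f' x = f b - f a := by
  rw [← integral_Ioc_eq_integral_Ioo, ← intervalIntegral.integral_of_le hab]
  refine intervalIntegral.integral_eq_sub_of_hasDerivAt_of_le hab hcont hderiv ?_
  exact (intervalIntegrable_iff_integrableOn_Ioc_of_le hab).mpr
    (intervalIntegral.integrableOn_deriv_of_nonneg hcont hderiv hpos)

theorem konno_density_integrates_to_one :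
    ∫ x in Set.Ioo (-(1 / Real.sqrt 2)) (1 / Real.sqrt 2),
      1 / (Real.pi * (1 - x ^ 2) * Real.sqrt (1 - 2 * x ^ 2)) = 1 := by
  set c : ℝ := 1 / √2
  have hc_pos : 0 < c := by positivity
  have hc_sq : c ^ 2 = 1 / 2 := by rw [div_pow, sq_sqrt zero_le_two, one_pow]
  have hx_sq : ∀ x ∈ Ioo (-c) c, 2 * x ^ 2 < 1 := fun x hx => by
    nlinarith [sq_lt_sq' hx.1 hx.2]
  have hc_lt_one : c < 1 := by nlinarith
  rw [integral_Ioo_eq_sub_of_hasDerivAt_of_nonneg (f := fun x => arcsin (x / √(1 - x ^ 2)) / π)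
    (neg_le_self hc_pos.le)]
  · rw [neg_sq, neg_div, arcsin_neg, one_div_sqrt_two_div_sqrt_one_sub_sq, arcsin_one]
    field_simp; ring
  · exact (continuousOn_arcsin_div_sqrt_one_sub_sq.mono
      (Icc_subset_Ioo (by linarith) hc_lt_one)).div_const π
  · intro x hx
    refine ((hasDerivAt_arcsin_div_sqrt_one_sub_sq (hx_sq x hx)).div_const π).congr_deriv ?_
    simp only [one_div, mul_inv]
    ring
  · intro x hx
    have hpos : 0 < 1 - x ^ 2 := by linarith [hx_sq x hx, sq_nonneg x]
    positivity
end

section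
/- Let Ĥ(k) = diag(e^{ik}, e^{-ik})·H and ν_d(k) = Tr(Ĥ(k)^{-d} · (i d/dk)² Ĥ(k)^d)/(2d). For d = 2, ν₂(k) = 1 for all k. -/
open Matrix Complex

/-- The 2×2 Hadamard matrix `(1/√2)[[1,1],[1,-1]]`. -/
noncomputable def hadamard2 : Matrix (Fin 2) (Fin 2) ℂ :=
  ((1 / Real.sqrt 2 : ℝ) : ℂ) • !![1, 1; 1, -1]

/-- The Fourier-transformed one-step evolution `Ĥ(k) = diag(e^{ik}, e^{-ik})·H`. -/
noncomputable def Hhat (k : ℝ) : Matrix (Fin 2) (Fin 2) ℂ :=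
  Matrix.diagonal ![Complex.exp (Complex.I * k), Complex.exp (-(Complex.I * k))] * hadamard2

/-! Each row of `Ĥ(k)²` oscillates at a single frequency: `Ĥ(k)² = D(k) A + B` with
`D(k) = diag(e^{2ik}, e^{-2ik})` and constant `A`, `B`. Hence `-(d/dk)² Ĥ(k)² = 4 D(k) A`, and
`ν₂(k) = tr(Ĥ(k)⁻² D(k) A)`, which a direct `2 × 2` computation using `e^{2ik} e^{-2ik} = 1`
evaluates to `1`. -/

lemma deriv_deriv_cexp_mul_mul_add (c a b : ℂ) (x : ℝ) :
    deriv (fun s : ℝ => deriv (fun t : ℝ => cexp (c * t) * a + b) s) x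
      = c ^ 2 * cexp (c * x) * a := by
  have hexp (y : ℝ) : HasDerivAt (fun t : ℝ => cexp (c * t)) (cexp (c * y) * c) y := by
    simpa using ((hasDerivAt_id (y : ℂ)).const_mul c).cexp.comp_ofReal
  have hfirst : (fun s : ℝ => deriv (fun t : ℝ => cexp (c * t) * a + b) s)
      = fun s : ℝ => cexp (c * s) * (c * a) := by
    funext s
    rw [((hexp s).mul_const a).add_const b |>.deriv]
    ring
  rw [hfirst, ((hexp x).mul_const (c * a)).deriv]
  ring

lemma deriv_deriv_diagonal_cexp_mul_add_apply {n : Type*} [Fintype n] [DecidableEq n]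
    (ω : n → ℂ) (A B : Matrix n n ℂ) (x : ℝ) (i j : n) :
    deriv (fun s : ℝ => deriv (fun t : ℝ => (diagonal (fun l => cexp (ω l * t)) * A + B) i j) s) x
      = (diagonal (fun l => ω l ^ 2 * cexp (ω l * x)) * A) i j := by
  simp only [Matrix.add_apply, diagonal_mul]
  exact deriv_deriv_cexp_mul_mul_add (ω i) (A i j) (B i j) x

lemma Hhat_sq (t : ℝ) :
    Hhat t ^ 2 = diagonal (fun l => cexp (![2 * I, -(2 * I)] l * t)) * (2⁻¹ : ℂ) • !![1, 1; -1, 1]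
      + (2⁻¹ : ℂ) • !![1, -1; 1, 1] := by
  have hs2 : ((Real.sqrt 2 : ℂ))⁻¹ ^ 2 = 2⁻¹ := by
    rw [inv_pow, ← ofReal_pow, Real.sq_sqrt zero_le_two]; push_cast; rfl
  have hsq : cexp (2 * I * t) = cexp (I * t) ^ 2 := by rw [sq, ← exp_add]; ring_nf
  have hsq' : cexp (-(2 * I * t)) = cexp (-(I * t)) ^ 2 := by rw [sq, ← exp_add]; ring_nf
  have hinv : cexp (I * t) * cexp (-(I * t)) = 1 := by rw [← exp_add]; simp
  ext i j
  fin_cases i <;> fin_cases j <;>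
    simp [Hhat, hadamard2, Matrix.mul_apply, Fin.sum_univ_two, hsq, hsq', sq] <;>
    ring_nf <;> rw [hs2] <;>
    first | linear_combination 2⁻¹ * hinv | linear_combination -2⁻¹ * hinv

lemma inv_diagonal_mul_add (d : Fin 2 → ℂ) (hd : d 0 * d 1 = 1) :
    (diagonal d * (2⁻¹ : ℂ) • !![1, 1; -1, 1] + (2⁻¹ : ℂ) • !![1, -1; 1, 1])⁻¹
      = (2⁻¹ : ℂ) • !![1 + d 1, 1 - d 0; d 1 - 1, 1 + d 0] := by
  apply inv_eq_right_inv
  ext i j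
  fin_cases i <;> fin_cases j <;>
    simp [Matrix.mul_apply, Fin.sum_univ_two] <;> grind

lemma trace_inv_diagonal_mul_add_mul (d : Fin 2 → ℂ) (hd : d 0 * d 1 = 1) :
    trace ((diagonal d * (2⁻¹ : ℂ) • !![1, 1; -1, 1] + (2⁻¹ : ℂ) • !![1, -1; 1, 1])⁻¹
      * (diagonal d * (2⁻¹ : ℂ) • !![1, 1; -1, 1])) = 1 := by
  rw [inv_diagonal_mul_add d hd]
  simp [trace_fin_two, Matrix.mul_apply, Fin.sum_univ_two, vecMul, dotProduct]
  linear_combination hd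

/-- `ν₂(k) = Tr(Ĥ(k)^{-2} · (i d/dk)² Ĥ(k)²)/(2·2) = 1` for all `k`;
note `(i d/dk)² = -d²/dk²` acting entrywise. -/
theorem nu_two_eq_one (k : ℝ) :
    Matrix.trace ((Hhat k ^ 2)⁻¹ *
        Matrix.of (fun i j : Fin 2 =>
          -(deriv (fun k' : ℝ => deriv (fun k'' : ℝ => (Hhat k'' ^ 2) i j) k') k))) /
      (2 * 2) = 1 := by
  set d : Fin 2 → ℂ := fun l => cexp (![2 * I, -(2 * I)] l * k)
  have hd : d 0 * d 1 = 1 := by simp [d, ← exp_add]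
  have hfreq (l : Fin 2) : ![2 * I, -(2 * I)] l ^ 2 = -4 := by
    fin_cases l <;> simp [mul_pow] <;> norm_num
  have hderiv : Matrix.of (fun i j : Fin 2 =>
      -(deriv (fun k' : ℝ => deriv (fun k'' : ℝ => (Hhat k'' ^ 2) i j) k') k))
      = (4 : ℂ) • (diagonal d * (2⁻¹ : ℂ) • !![1, 1; -1, 1]) := by
    ext i j
    simp only [of_apply, Hhat_sq, deriv_deriv_diagonal_cexp_mul_add_apply, hfreq]
    simp [diagonal_mul, d]
    ring
  rw [hderiv, Hhat_sq, mul_smul_comm, trace_smul, trace_inv_diagonal_mul_add_mul d hd]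
  norm_num
end

section
/- Let Ĥ(k) = diag(e^{ik}, e^{-ik})·H, φ₀ = (1/√2, i/√2)ᵀ, and μ_d(k) = ⟨Ĥ(k)^d φ₀, (i d/dk)(Ĥ(k)^d φ₀)⟩/d. For d = 2, μ₂(k) = (sin 2k)/2 for all k ∈ ℝ. -/
/-!
Since `Ĥ(k) = (1/√2)[[e, e], [ē, -ē]]` with `e = e^{ik}`, both components of `ψ(k) = Ĥ(k)²φ₀`
have the form `a e^{±2ik} + b`. For such a component `conj ψⱼ · i ψⱼ' = ∓2 (|a|² + b̄ a e^{±2ik})`,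
because `|e^{±2ik}| = 1`. Here `|a|² = 1/4` and `b̄ a = i/4` in both components, so the constant
terms cancel and `μ₂(k) = (i/4)(e^{-2ik} - e^{2ik}) = (sin 2k)/2`.
-/

open Matrix Complex

/-- The symmetric initial qubit `φ₀ = (1/√2, i/√2)ᵀ`. -/
noncomputable def phi0 : Fin 2 → ℂ :=
  ![((1 / Real.sqrt 2 : ℝ) : ℂ), Complex.I * ((1 / Real.sqrt 2 : ℝ) : ℂ)]

theorem hasDerivAt_mul_exp_ofReal_mul_I_add (a b : ℂ) (m k : ℝ) :
    HasDerivAt (fun x : ℝ => a * exp (m * x * I) + b) (a * (m * I * exp (m * k * I))) k := by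
  have hlin : HasDerivAt (fun x : ℝ => (m : ℂ) * x * I) (m * I) k := by
    simpa using (((hasDerivAt_id k).ofReal_comp).const_mul (m : ℂ)).mul_const I
  simpa [mul_comm] using (hlin.cexp.const_mul a).add_const b

theorem star_mul_I_mul_deriv_mul_exp_add (a b : ℂ) (m k : ℝ) :
    star (a * exp (m * k * I) + b) * (I * deriv (fun x : ℝ => a * exp (m * x * I) + b) k) =
      -m * (star a * a + star b * a * exp (m * k * I)) := by
  have hunit : star (exp (m * k * I)) * exp (m * k * I) = 1 := by
    rw [← ofReal_mul, star_def, conj_mul', norm_exp_ofReal_mul_I, ofReal_one, one_pow]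
  rw [(hasDerivAt_mul_exp_ofReal_mul_I_add a b m k).deriv, star_add, star_mul']
  linear_combination (m * star a * a * I ^ 2) * hunit
    + (m * star a * a + m * star b * a * exp (m * k * I)) * I_sq

theorem Hhat_eq (k : ℝ) :
    Hhat k = ((1 / Real.sqrt 2 : ℝ) : ℂ) •
      !![exp (k * I), exp (k * I); exp (-(k * I)), -exp (-(k * I))] := by
  rw [Hhat, hadamard2, mul_smul_comm, diagonal_fin_two, mul_fin_two]
  simp [mul_comm I]

theorem Hhat_sq_mulVec_phi0 (k : ℝ) : Hhat k ^ 2 *ᵥ phi0 =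
    ![(1 + I) / (2 * Real.sqrt 2) * exp (2 * k * I) + (1 - I) / (2 * Real.sqrt 2),
      (I - 1) / (2 * Real.sqrt 2) * exp (-2 * k * I) + (1 + I) / (2 * Real.sqrt 2)] := by
  set r : ℂ := ((Real.sqrt 2 : ℝ) : ℂ)
  have hr : r⁻¹ ^ 2 = 1 / 2 := by
    rw [inv_pow, ← ofReal_pow, Real.sq_sqrt zero_le_two, ofReal_ofNat, one_div]
  set e := exp (k * I)
  set e' := exp (-(k * I))
  have hsq : e * e = exp (2 * k * I) := by rw [← exp_add]; ring_nf
  have hsq' : e' * e' = exp (-2 * k * I) := by rw [← exp_add]; ring_nf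
  have hunit : e * e' = 1 := by rw [← exp_add, add_neg_cancel, exp_zero]
  rw [pow_two, ← mulVec_mulVec, Hhat_eq, phi0]
  ext i
  fin_cases i <;>
    simp only [mulVec, dotProduct, Fin.sum_univ_two, Matrix.smul_apply, of_apply, cons_val',
      cons_val_zero, cons_val_one, cons_val_fin_one, smul_eq_mul, Fin.zero_eta, Fin.mk_one,
      ofReal_div, ofReal_one]
  · linear_combination r⁻¹ * ((1 + I) * e * e + (1 - I) * e * e') * hr
      + r⁻¹ * (1 + I) / 2 * hsq + r⁻¹ * (1 - I) / 2 * hunit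
  · linear_combination r⁻¹ * ((1 + I) * e * e' + (I - 1) * e' * e') * hr
      + r⁻¹ * (I - 1) / 2 * hsq' + r⁻¹ * (1 + I) / 2 * hunit

theorem star_div_two_sqrt_two_mul (z w : ℂ) :
    star (z / (2 * Real.sqrt 2)) * (w / (2 * Real.sqrt 2)) = star z * w / 8 := by
  have hr : ((Real.sqrt 2 : ℝ) : ℂ) ^ 2 = 2 := by
    rw [← ofReal_pow, Real.sq_sqrt zero_le_two, ofReal_ofNat]
  have hr_star : star ((Real.sqrt 2 : ℝ) : ℂ) = Real.sqrt 2 := conj_ofReal _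
  rw [star_div₀, star_mul', star_ofNat, hr_star]
  field_simp
  linear_combination -4 * star z * w * hr

/-- `μ₂(k) = ⟨Ĥ(k)²φ₀, (i d/dk)(Ĥ(k)²φ₀)⟩/2 = (sin 2k)/2`. -/
theorem mu_two_eq_sin (k : ℝ) :
    star (Hhat k ^ 2 *ᵥ phi0) ⬝ᵥ
        (fun i : Fin 2 => Complex.I * deriv (fun k' : ℝ => (Hhat k' ^ 2 *ᵥ phi0) i) k) / 2 =
      ((Real.sin (2 * k) / 2 : ℝ) : ℂ) := by
  have hsin : ((Real.sin (2 * k) : ℝ) : ℂ) = (exp (-2 * k * I) - exp (2 * k * I)) * I / 2 := by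
    rw [ofReal_sin, sin]; push_cast; ring_nf
  have hψ₀ := star_mul_I_mul_deriv_mul_exp_add
    ((1 + I) / (2 * Real.sqrt 2)) ((1 - I) / (2 * Real.sqrt 2)) 2 k
  have hψ₁ := star_mul_I_mul_deriv_mul_exp_add
    ((I - 1) / (2 * Real.sqrt 2)) ((1 + I) / (2 * Real.sqrt 2)) (-2) k
  push_cast at hψ₀ hψ₁
  simp only [dotProduct, Fin.sum_univ_two, Pi.star_apply, Hhat_sq_mulVec_phi0, cons_val_zero,
    cons_val_one, cons_val_fin_one]
  rw [hψ₀, hψ₁, ofReal_div, hsin, star_div_two_sqrt_two_mul, star_div_two_sqrt_two_mul,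
    star_div_two_sqrt_two_mul, star_div_two_sqrt_two_mul]
  simp only [star_add, star_sub, star_one, star_def, conj_I, ofReal_ofNat]
  linear_combination -(exp (2 * k * I) + exp (-2 * k * I)) / 8 * I_sq
end
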